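/- If Q is a minimizer of m̃_ω = inf{ I_ω(u) : u ∈ H¹(ℝᵈ)\{0}, K(u) ≤ 0 }, then K(Q) = 0, and consequently Q is also a minimizer of m_ω = inf{ S_ω(u) : u ≠ 0, K(u) = 0 }. -/

import Mathlib

open MeasureTheory Filter Asymptotics Real Topology

noncomputable section

abbrev Ed (d : ℕ) : Type := EuclideanSpace ℝ (Fin d)

/-- squared L² norm -/
def l2sq (d : ℕ) (u : Ed d → ℝ) : ℝ := ∫ x : Ed d, (u x) ^ 2

/-- squared L² norm of the gradient -/
def gradsq (d : ℕ) (u : Ed d → ℝ) : ℝ := ∫ x : Ed d, ‖fderiv ℝ u x‖ ^ 2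

/-- ∫ |u|^q -/
def lpInt (d : ℕ) (q : ℝ) (u : Ed d → ℝ) : ℝ := ∫ x : Ed d, |u x| ^ q

/-- critical Sobolev exponent 2* = 2d/(d-2) -/
def twoStar (d : ℕ) : ℝ := 2 * (d : ℝ) / ((d : ℝ) - 2)

/-- membership in H¹(ℝᵈ) -/
def H1 (d : ℕ) (u : Ed d → ℝ) : Prop :=
  MemLp u 2 (volume : Measure (Ed d)) ∧ Differentiable ℝ u ∧
    MemLp (fun x => ‖fderiv ℝ u x‖) 2 (volume : Measure (Ed d))

/-- L²-scaling operator (T_λ u)(x) = λ^{d/2} u(λ x) -/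
def Tscal (d : ℕ) (lam : ℝ) (u : Ed d → ℝ) : Ed d → ℝ :=
  fun x => lam ^ ((d : ℝ) / 2) * u (lam • x)

/-- the action S_ω -/
def Sfun (d : ℕ) (ω μ p : ℝ) (u : Ed d → ℝ) : ℝ :=
  ω * l2sq d u + gradsq d u - (2 * μ / (p + 1)) * lpInt d (p + 1) u
    - (((d : ℝ) - 2) / (d : ℝ)) * lpInt d (twoStar d) u

/-- the functional K -/
def Kfun (d : ℕ) (μ p : ℝ) (u : Ed d → ℝ) : ℝ :=
  2 * gradsq d u - μ * ((d : ℝ) * (p - 1) / (p + 1)) * lpInt d (p + 1) u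
    - 2 * lpInt d (twoStar d) u

/-- the functional I_ω -/
def Ifun (d : ℕ) (ω p : ℝ) (u : Ed d → ℝ) : ℝ :=
  ω * l2sq d u + (((d : ℝ) * (p - 1) - 4) / ((d : ℝ) * (p - 1))) * gradsq d u
    + ((4 - ((d : ℝ) - 2) * (p - 1)) / ((d : ℝ) * (p - 1))) * lpInt d (twoStar d) u

/-- admissible class: nonzero H¹ functions (lying also in L^{p+1} and L^{2*}) -/
def adm (d : ℕ) (p : ℝ) (u : Ed d → ℝ) : Prop :=
  H1 d u ∧ ¬ (u =ᵐ[(volume : Measure (Ed d))] 0) ∧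
    MemLp u (ENNReal.ofReal (p + 1)) (volume : Measure (Ed d)) ∧
    MemLp u (ENNReal.ofReal (twoStar d)) (volume : Measure (Ed d))

/-- the variational value m_ω -/
def mOmega (d : ℕ) (ω μ p : ℝ) : ℝ :=
  sInf {y | ∃ u : Ed d → ℝ, adm d p u ∧ Kfun d μ p u = 0 ∧ y = Sfun d ω μ p u}

/-- the variational value m̃_ω -/
def mTilde (d : ℕ) (ω μ p : ℝ) : ℝ :=
  sInf {y | ∃ u : Ed d → ℝ, adm d p u ∧ Kfun d μ p u ≤ 0 ∧ y = Ifun d ω p u}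

/-- best Sobolev constant σ -/
def sobolev (d : ℕ) : ℝ :=
  sInf {y | ∃ u : Ed d → ℝ, Differentiable ℝ u ∧ lpInt d (twoStar d) u = 1 ∧ y = gradsq d u}

/-- Laplacian -/
def lap (d : ℕ) (u : Ed d → ℝ) (x : Ed d) : ℝ :=
  ∑ i : Fin d, fderiv ℝ (fun y => fderiv ℝ u y (EuclideanSpace.single i 1)) x
    (EuclideanSpace.single i 1)

/-!
If `K(Q) < 0`, a competitor with `K ≤ 0` and strictly smaller `I_ω` contradicts minimality.
Under the mass-preserving scaling `T_t`, `K(T_t Q) = t² g(t)` with `g` continuous on `[0, 1]`,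
`g(0) = 2‖∇Q‖² > 0` and `g(1) = K(Q) < 0`, so `K(T_t Q) = 0` for some `t ∈ (0, 1)`, while every
term of `I_ω` shrinks. (If `‖∇Q‖ = 0`, the competitor is `Q / 2` instead.) Once `K(Q) = 0`,
the identity `S_ω = I_ω + 2 K / (d (p - 1))` identifies `S_ω(Q)` with `m̃_ω`, and the same identity
gives `m̃_ω ≤ m_ω`.
-/

section Integrals

variable {d : ℕ}

lemma l2sq_nonneg (u : Ed d → ℝ) : 0 ≤ l2sq d u :=
  integral_nonneg fun _ => sq_nonneg _

lemma gradsq_nonneg (u : Ed d → ℝ) : 0 ≤ gradsq d u :=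
  integral_nonneg fun _ => sq_nonneg _

lemma lpInt_nonneg (q : ℝ) (u : Ed d → ℝ) : 0 ≤ lpInt d q u :=
  integral_nonneg fun _ => rpow_nonneg (abs_nonneg _) q

lemma l2sq_pos {u : Ed d → ℝ} (hu : MemLp u 2 volume) (hne : ¬ u =ᵐ[volume] 0) :
    0 < l2sq d u := by
  refine (l2sq_nonneg u).lt_of_ne fun h => hne ?_
  have hsq : (fun x => u x ^ 2) =ᵐ[volume] 0 :=
    (integral_eq_zero_iff_of_nonneg (fun x => sq_nonneg (u x)) hu.integrable_sq).mp h.symm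
  filter_upwards [hsq] with x hx
  exact pow_eq_zero_iff two_ne_zero |>.mp hx

lemma integral_comp_smul_Ed (f : Ed d → ℝ) {t : ℝ} (ht : 0 < t) :
    ∫ x : Ed d, f (t • x) = (t ^ d)⁻¹ * ∫ x : Ed d, f x := by
  rw [Measure.integral_comp_smul_of_nonneg volume f t (hR := ht.le)]
  simp [smul_eq_mul]

lemma rpow_half_sq {t : ℝ} (ht : 0 < t) : (t ^ ((d : ℝ) / 2)) ^ 2 = t ^ d := by
  rw [← rpow_natCast (t ^ ((d : ℝ) / 2)) 2, ← rpow_mul ht.le]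
  norm_num

lemma hasFDerivAt_Tscal {u : Ed d → ℝ} (hu : Differentiable ℝ u) (t : ℝ) (x : Ed d) :
    HasFDerivAt (Tscal d t u) ((t ^ ((d : ℝ) / 2) * t) • fderiv ℝ u (t • x)) x := by
  have h := ((hu (t • x)).hasFDerivAt.comp x
    (t • ContinuousLinearMap.id ℝ (Ed d)).hasFDerivAt).const_mul (t ^ ((d : ℝ) / 2))
  rw [ContinuousLinearMap.comp_smul, ContinuousLinearMap.comp_id, smul_smul] at h
  exact h

lemma norm_fderiv_Tscal {u : Ed d → ℝ} (hu : Differentiable ℝ u) {t : ℝ} (ht : 0 < t)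
    (x : Ed d) :
    ‖fderiv ℝ (Tscal d t u) x‖ = t ^ ((d : ℝ) / 2) * t * ‖fderiv ℝ u (t • x)‖ := by
  rw [(hasFDerivAt_Tscal hu t x).fderiv, norm_smul, norm_of_nonneg (by positivity)]

lemma l2sq_Tscal (u : Ed d → ℝ) {t : ℝ} (ht : 0 < t) : l2sq d (Tscal d t u) = l2sq d u := by
  have hpt : ∀ x : Ed d, Tscal d t u x ^ 2 = t ^ d * u (t • x) ^ 2 := fun x => by
    rw [Tscal, mul_pow, rpow_half_sq ht]
  simp only [l2sq, hpt, integral_const_mul, integral_comp_smul_Ed (fun y => u y ^ 2) ht]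
  field_simp

lemma gradsq_Tscal {u : Ed d → ℝ} (hu : Differentiable ℝ u) {t : ℝ} (ht : 0 < t) :
    gradsq d (Tscal d t u) = t ^ 2 * gradsq d u := by
  have hpt : ∀ x : Ed d, ‖fderiv ℝ (Tscal d t u) x‖ ^ 2
      = t ^ d * t ^ 2 * ‖fderiv ℝ u (t • x)‖ ^ 2 := fun x => by
    rw [norm_fderiv_Tscal hu ht, mul_pow, mul_pow, rpow_half_sq ht]
  simp only [gradsq, hpt, integral_const_mul,
    integral_comp_smul_Ed (fun y => ‖fderiv ℝ u y‖ ^ 2) ht]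
  field_simp

lemma lpInt_Tscal (q : ℝ) (u : Ed d → ℝ) {t : ℝ} (ht : 0 < t) :
    lpInt d q (Tscal d t u) = t ^ ((d : ℝ) / 2 * q - d) * lpInt d q u := by
  have hpt : ∀ x : Ed d, |Tscal d t u x| ^ q = t ^ ((d : ℝ) / 2 * q) * |u (t • x)| ^ q :=
    fun x => by
      rw [Tscal, abs_mul, mul_rpow (abs_nonneg _) (abs_nonneg _),
        abs_of_pos (rpow_pos_of_pos ht _), rpow_mul ht.le]
  simp only [lpInt, hpt, integral_const_mul, integral_comp_smul_Ed (fun y => |u y| ^ q) ht]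
  rw [rpow_sub ht, rpow_natCast]
  ring

lemma memLp_comp_smul {u : Ed d → ℝ} {r : ENNReal} {t : ℝ} (ht : t ≠ 0)
    (hu : MemLp u r volume) : MemLp (fun x : Ed d => u (t • x)) r volume := by
  have hmap : Measure.map (t • ·) (volume : Measure (Ed d))
      = ENNReal.ofReal |(t ^ Module.finrank ℝ (Ed d))⁻¹| • volume :=
    Measure.map_addHaar_smul volume ht
  have hu' : MemLp u r (Measure.map (t • ·) (volume : Measure (Ed d))) :=
    hmap ▸ hu.smul_measure ENNReal.ofReal_ne_top
  exact (memLp_map_measure_iff hu'.aestronglyMeasurable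
    (measurable_const_smul t).aemeasurable).1 hu'

lemma ae_eq_zero_of_comp_smul {u : Ed d → ℝ} {t : ℝ} (ht : t ≠ 0)
    (h : (fun x : Ed d => u (t • x)) =ᵐ[volume] 0) : u =ᵐ[volume] 0 := by
  have hq : Measure.QuasiMeasurePreserving (fun x : Ed d => t⁻¹ • x) volume volume :=
    Measure.quasiMeasurePreserving_smul volume (inv_ne_zero ht)
  have h' := h.comp_tendsto hq.tendsto_ae
  simp only [Function.comp_def, smul_smul, mul_inv_cancel₀ ht, one_smul] at h'
  exact h'

lemma adm_Tscal {p : ℝ} {u : Ed d → ℝ} (hu : adm d p u) {t : ℝ} (ht : 0 < t) :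
    adm d p (Tscal d t u) := by
  obtain ⟨⟨hu2, hud, hug⟩, hne, hup, hus⟩ := hu
  have hc : t ^ ((d : ℝ) / 2) ≠ 0 := (rpow_pos_of_pos ht _).ne'
  refine ⟨⟨(memLp_comp_smul ht.ne' hu2).const_mul _,
    fun x => (hasFDerivAt_Tscal hud t x).differentiableAt, ?_⟩, fun h => hne ?_,
    (memLp_comp_smul ht.ne' hup).const_mul _, (memLp_comp_smul ht.ne' hus).const_mul _⟩
  · simp_rw [norm_fderiv_Tscal hud ht]
    exact (memLp_comp_smul ht.ne' hug).const_mul _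
  · refine ae_eq_zero_of_comp_smul ht.ne' ?_
    filter_upwards [h] with x hx
    exact (mul_eq_zero.1 hx).resolve_left hc

lemma l2sq_const_mul (c : ℝ) (u : Ed d → ℝ) :
    l2sq d (fun x => c * u x) = c ^ 2 * l2sq d u := by
  simp only [l2sq, mul_pow, integral_const_mul]

lemma gradsq_const_mul (c : ℝ) {u : Ed d → ℝ} (hu : Differentiable ℝ u) :
    gradsq d (fun x => c * u x) = c ^ 2 * gradsq d u := by
  have hpt : ∀ x : Ed d, ‖fderiv ℝ (fun y => c * u y) x‖ ^ 2 = c ^ 2 * ‖fderiv ℝ u x‖ ^ 2 :=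
    fun x => by rw [fderiv_const_mul (hu x) c, norm_smul, norm_eq_abs, mul_pow, sq_abs]
  simp only [gradsq, hpt, integral_const_mul]

lemma lpInt_const_mul (q c : ℝ) (u : Ed d → ℝ) :
    lpInt d q (fun x => c * u x) = |c| ^ q * lpInt d q u := by
  simp only [lpInt, abs_mul, mul_rpow (abs_nonneg _) (abs_nonneg _), integral_const_mul]

lemma adm_const_mul {p c : ℝ} (hc : c ≠ 0) {u : Ed d → ℝ} (hu : adm d p u) :
    adm d p (fun x => c * u x) := by
  obtain ⟨⟨hu2, hud, hug⟩, hne, hup, hus⟩ := hu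
  refine ⟨⟨hu2.const_mul c, hud.const_mul c, ?_⟩, fun h => hne ?_, hup.const_mul c,
    hus.const_mul c⟩
  · simp_rw [fderiv_const_mul (hud _) c, norm_smul]
    exact hug.const_mul _
  · filter_upwards [h] with x hx
    exact (mul_eq_zero.1 hx).resolve_left hc

end Integrals

lemma exists_mem_Ioo_mul_sq_sub_rpow_eq_zero {G A B a b : ℝ} (hG : 0 < G) (ha : 2 < a)
    (hb : 2 < b) (h1 : G - A - B < 0) :
    ∃ t ∈ Set.Ioo (0 : ℝ) 1, G * t ^ 2 - A * t ^ a - B * t ^ b = 0 := by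
  set g : ℝ → ℝ := fun t => G - A * t ^ (a - 2) - B * t ^ (b - 2)
  have hg : Continuous g :=
    (continuous_const.sub (continuous_const.mul (continuous_rpow_const (by linarith)))).sub
      (continuous_const.mul (continuous_rpow_const (by linarith)))
  have hg0 : g 0 = G := by
    simp [g, zero_rpow (by linarith : a - 2 ≠ 0), zero_rpow (by linarith : b - 2 ≠ 0)]
  have hg1 : g 1 = G - A - B := by simp [g]
  obtain ⟨t, ht, hgt⟩ := intermediate_value_Ioo' zero_le_one hg.continuousOn
    (show (0 : ℝ) ∈ Set.Ioo (g 1) (g 0) by rw [hg0, hg1]; exact ⟨h1, hG⟩)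
  refine ⟨t, ht, ?_⟩
  have hsplit : ∀ e : ℝ, t ^ e = t ^ 2 * t ^ (e - 2) := fun e => by
    rw [← rpow_natCast, ← rpow_add ht.1]
    norm_num
  rw [hsplit a, hsplit b]
  linear_combination t ^ 2 * hgt

section Functionals

variable {d : ℕ} {ω μ p : ℝ}

lemma two_lt_twoStar (hd : 2 < d) : 2 < twoStar d := by
  have hd' : (2 : ℝ) < d := by exact_mod_cast hd
  rw [twoStar, lt_div_iff₀ (by linarith)]
  linarith

lemma four_lt_mul_sub_one (hd : 0 < d) (hp : 1 + 4 / d < p) : 4 < d * (p - 1) := by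
  have h := (div_lt_iff₀ (by exact_mod_cast hd : (0 : ℝ) < d)).1 (by linarith : 4 / (d : ℝ) < p - 1)
  linarith

lemma sub_two_mul_sub_one_lt_four (hd : 2 < d) (hp : p < twoStar d - 1) :
    (d - 2) * (p - 1) < 4 := by
  have hd' : (0 : ℝ) < d - 2 := by
    have : (2 : ℝ) < d := by exact_mod_cast hd
    linarith
  have h := (lt_div_iff₀ hd').1 (by rw [twoStar] at hp; linarith : p + 1 < 2 * d / (d - 2))
  linarith

lemma scaling_exponent_twoStar (hd : 2 < d) : (d : ℝ) / 2 * twoStar d - d = twoStar d := by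
  have hd' : (d : ℝ) - 2 ≠ 0 := by
    have : (2 : ℝ) < d := by exact_mod_cast hd
    linarith
  rw [twoStar]
  field_simp
  ring

lemma Sfun_eq_Ifun_add_Kfun (hd : d ≠ 0) (hp : p ≠ 1) (u : Ed d → ℝ) :
    Sfun d ω μ p u = Ifun d ω p u + 2 / (d * (p - 1)) * Kfun d μ p u := by
  have hd' : (d : ℝ) ≠ 0 := by exact_mod_cast hd
  have hp' : p - 1 ≠ 0 := sub_ne_zero.2 hp
  simp only [Sfun, Ifun, Kfun]
  field_simp
  ring

lemma Sfun_eq_Ifun_of_Kfun_eq_zero (hd : d ≠ 0) (hp : p ≠ 1) {u : Ed d → ℝ}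
    (hK : Kfun d μ p u = 0) : Sfun d ω μ p u = Ifun d ω p u := by
  rw [Sfun_eq_Ifun_add_Kfun hd hp, hK, mul_zero, add_zero]

lemma Ifun_nonneg (hω : 0 ≤ ω) (hp : 4 ≤ d * (p - 1)) (hp' : (d - 2) * (p - 1) ≤ 4)
    (u : Ed d → ℝ) : 0 ≤ Ifun d ω p u := by
  have h1 := mul_nonneg hω (l2sq_nonneg u)
  have h2 := mul_nonneg (div_nonneg (by linarith) (by linarith) :
    0 ≤ ((d : ℝ) * (p - 1) - 4) / (d * (p - 1))) (gradsq_nonneg u)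
  have h3 := mul_nonneg (div_nonneg (by linarith) (by linarith) :
    0 ≤ (4 - ((d : ℝ) - 2) * (p - 1)) / (d * (p - 1))) (lpInt_nonneg (twoStar d) u)
  rw [Ifun]
  linarith

lemma Kfun_Tscal (hd : 2 < d) {u : Ed d → ℝ} (hu : Differentiable ℝ u) {t : ℝ} (ht : 0 < t) :
    Kfun d μ p (Tscal d t u) = 2 * gradsq d u * t ^ 2
      - μ * (d * (p - 1) / (p + 1)) * lpInt d (p + 1) u * t ^ ((d : ℝ) * (p - 1) / 2)
      - 2 * lpInt d (twoStar d) u * t ^ twoStar d := by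
  rw [Kfun, gradsq_Tscal hu ht, lpInt_Tscal _ _ ht, lpInt_Tscal _ _ ht,
    scaling_exponent_twoStar hd, show (d : ℝ) / 2 * (p + 1) - d = d * (p - 1) / 2 by ring]
  ring

lemma exists_Kfun_Tscal_eq_zero (hd : 2 < d) (hp : 4 < d * (p - 1)) {u : Ed d → ℝ}
    (hu : Differentiable ℝ u) (hG : 0 < gradsq d u) (hK : Kfun d μ p u < 0) :
    ∃ t ∈ Set.Ioo (0 : ℝ) 1, Kfun d μ p (Tscal d t u) = 0 := by
  obtain ⟨t, ht, h⟩ := exists_mem_Ioo_mul_sq_sub_rpow_eq_zero (by positivity : 0 < 2 * gradsq d u)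
    (by linarith : 2 < (d : ℝ) * (p - 1) / 2) (two_lt_twoStar hd) hK
  exact ⟨t, ht, (Kfun_Tscal hd hu ht.1).trans h⟩

lemma Ifun_Tscal_lt (hd : 2 < d) (hp : 4 < d * (p - 1)) (hp' : (d - 2) * (p - 1) ≤ 4)
    {u : Ed d → ℝ} (hu : Differentiable ℝ u) (hG : 0 < gradsq d u) {t : ℝ}
    (ht : t ∈ Set.Ioo (0 : ℝ) 1) : Ifun d ω p (Tscal d t u) < Ifun d ω p u := by
  have hC1 : 0 < ((d : ℝ) * (p - 1) - 4) / (d * (p - 1)) := div_pos (by linarith) (by linarith)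
  have hC2 : 0 ≤ (4 - ((d : ℝ) - 2) * (p - 1)) / (d * (p - 1)) :=
    div_nonneg (by linarith) (by linarith)
  have hG' : t ^ 2 * gradsq d u < gradsq d u :=
    mul_lt_of_lt_one_left hG (pow_lt_one₀ ht.1.le ht.2 two_ne_zero)
  have hE : t ^ twoStar d * lpInt d (twoStar d) u ≤ lpInt d (twoStar d) u :=
    mul_le_of_le_one_left (lpInt_nonneg _ u)
      (rpow_le_one ht.1.le ht.2.le (zero_le_two.trans (two_lt_twoStar hd).le))
  rw [Ifun, Ifun, l2sq_Tscal u ht.1, gradsq_Tscal hu ht.1, lpInt_Tscal _ _ ht.1,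
    scaling_exponent_twoStar hd]
  linarith [mul_lt_mul_of_pos_left hG' hC1, mul_le_mul_of_nonneg_left hE hC2]

lemma Kfun_const_mul_nonpos (hμ : 0 ≤ μ) (hp : 1 ≤ p) {u : Ed d → ℝ} (hu : Differentiable ℝ u)
    (hG : gradsq d u = 0) (c : ℝ) : Kfun d μ p (fun x => c * u x) ≤ 0 := by
  have hA : 0 ≤ μ * (d * (p - 1) / (p + 1)) :=
    mul_nonneg hμ (div_nonneg (by have := sub_nonneg.2 hp; positivity) (by linarith))
  have hP := mul_nonneg hA (mul_nonneg (rpow_nonneg (abs_nonneg c) (p + 1)) (lpInt_nonneg (p + 1) u))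
  have hE := mul_nonneg (rpow_nonneg (abs_nonneg c) (twoStar d)) (lpInt_nonneg (twoStar d) u)
  rw [Kfun, gradsq_const_mul c hu, hG, lpInt_const_mul, lpInt_const_mul]
  linarith

lemma Ifun_const_mul_lt (hd : 2 < d) (hω : 0 < ω) (hp : 4 ≤ d * (p - 1))
    (hp' : (d - 2) * (p - 1) ≤ 4) {u : Ed d → ℝ} (hu : Differentiable ℝ u)
    (hL : 0 < l2sq d u) {c : ℝ} (hc : c ∈ Set.Ioo (0 : ℝ) 1) :
    Ifun d ω p (fun x => c * u x) < Ifun d ω p u := by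
  have hC1 : 0 ≤ ((d : ℝ) * (p - 1) - 4) / (d * (p - 1)) := div_nonneg (by linarith) (by linarith)
  have hC2 : 0 ≤ (4 - ((d : ℝ) - 2) * (p - 1)) / (d * (p - 1)) :=
    div_nonneg (by linarith) (by linarith)
  have hc2 : c ^ 2 < 1 := pow_lt_one₀ hc.1.le hc.2 two_ne_zero
  have hL' : c ^ 2 * l2sq d u < l2sq d u := mul_lt_of_lt_one_left hL hc2
  have hG : c ^ 2 * gradsq d u ≤ gradsq d u := mul_le_of_le_one_left (gradsq_nonneg u) hc2.le
  have hE : |c| ^ twoStar d * lpInt d (twoStar d) u ≤ lpInt d (twoStar d) u :=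
    mul_le_of_le_one_left (lpInt_nonneg _ u) (rpow_le_one (abs_nonneg c)
      (by rw [abs_of_pos hc.1]; exact hc.2.le) (zero_le_two.trans (two_lt_twoStar hd).le))
  rw [Ifun, Ifun, l2sq_const_mul, gradsq_const_mul c hu, lpInt_const_mul]
  linarith [mul_lt_mul_of_pos_left hL' hω, mul_le_mul_of_nonneg_left hG hC1,
    mul_le_mul_of_nonneg_left hE hC2]

end Functionals

section Minimizers

variable {d : ℕ} {ω μ p : ℝ}

lemma exists_adm_Kfun_nonpos_Ifun_lt (hd : 2 < d) (hω : 0 < ω) (hμ : 0 ≤ μ)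
    (hp : 4 < d * (p - 1)) (hp' : (d - 2) * (p - 1) ≤ 4) {Q : Ed d → ℝ} (hQ : adm d p Q)
    (hK : Kfun d μ p Q < 0) :
    ∃ v, adm d p v ∧ Kfun d μ p v ≤ 0 ∧ Ifun d ω p v < Ifun d ω p Q := by
  have hQd : Differentiable ℝ Q := hQ.1.2.1
  rcases (gradsq_nonneg Q).eq_or_lt with hG | hG
  · have hp1 : 1 ≤ p := by
      have := pos_of_mul_pos_right (by linarith : (0 : ℝ) < d * (p - 1)) (Nat.cast_nonneg d)
      linarith
    exact ⟨fun x => 2⁻¹ * Q x, adm_const_mul (by norm_num) hQ,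
      Kfun_const_mul_nonpos hμ hp1 hQd hG.symm _,
      Ifun_const_mul_lt hd hω hp.le hp' hQd (l2sq_pos hQ.1.1 hQ.2.1) (by norm_num)⟩
  · obtain ⟨t, ht, hKt⟩ := exists_Kfun_Tscal_eq_zero hd hp hQd hG hK
    exact ⟨Tscal d t Q, adm_Tscal hQ ht.1, hKt.le, Ifun_Tscal_lt hd hp hp' hQd hG ht⟩

lemma mTilde_le_Ifun (hω : 0 ≤ ω) (hp : 4 ≤ d * (p - 1)) (hp' : (d - 2) * (p - 1) ≤ 4)
    {v : Ed d → ℝ} (hv : adm d p v) (hK : Kfun d μ p v ≤ 0) :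
    mTilde d ω μ p ≤ Ifun d ω p v :=
  csInf_le ⟨0, by rintro _ ⟨u, -, -, rfl⟩; exact Ifun_nonneg hω hp hp' u⟩ ⟨v, hv, hK, rfl⟩

lemma Kfun_eq_zero_of_Ifun_eq_mTilde (hd : 2 < d) (hω : 0 < ω) (hμ : 0 ≤ μ)
    (hp : 4 < d * (p - 1)) (hp' : (d - 2) * (p - 1) ≤ 4) {Q : Ed d → ℝ} (hQ : adm d p Q)
    (hK : Kfun d μ p Q ≤ 0) (hmin : Ifun d ω p Q = mTilde d ω μ p) : Kfun d μ p Q = 0 := by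
  refine hK.antisymm (not_lt.1 fun hlt => ?_)
  obtain ⟨v, hv, hKv, hIv⟩ := exists_adm_Kfun_nonpos_Ifun_lt hd hω hμ hp hp' hQ hlt
  exact (mTilde_le_Ifun hω.le hp.le hp' hv hKv).not_gt (hmin ▸ hIv)

lemma mOmega_le_Sfun (hd : d ≠ 0) (hp1 : p ≠ 1) (hω : 0 ≤ ω) (hp : 4 ≤ d * (p - 1))
    (hp' : (d - 2) * (p - 1) ≤ 4) {v : Ed d → ℝ} (hv : adm d p v) (hK : Kfun d μ p v = 0) :
    mOmega d ω μ p ≤ Sfun d ω μ p v := by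
  refine csInf_le ⟨0, ?_⟩ ⟨v, hv, hK, rfl⟩
  rintro _ ⟨u, -, hKu, rfl⟩
  rw [Sfun_eq_Ifun_of_Kfun_eq_zero hd hp1 hKu]
  exact Ifun_nonneg hω hp hp' u

lemma mTilde_le_mOmega (hd : d ≠ 0) (hp1 : p ≠ 1) (hω : 0 ≤ ω) (hp : 4 ≤ d * (p - 1))
    (hp' : (d - 2) * (p - 1) ≤ 4) (hne : ∃ u, adm d p u ∧ Kfun d μ p u = 0) :
    mTilde d ω μ p ≤ mOmega d ω μ p := by
  obtain ⟨v, hv, hKv⟩ := hne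
  refine le_csInf ⟨_, v, hv, hKv, rfl⟩ ?_
  rintro _ ⟨u, hu, hKu, rfl⟩
  rw [Sfun_eq_Ifun_of_Kfun_eq_zero hd hp1 hKu]
  exact mTilde_le_Ifun hω hp hp' hu hKu.le

end Minimizers

/-- any minimizer of m̃_ω satisfies K(Q) = 0 and is a minimizer of m_ω. -/
theorem stmt7 (d : ℕ) (hd : 3 ≤ d) (ω μ p : ℝ) (hω : 0 < ω) (hμ : 0 < μ)
    (hp1 : 1 + 4 / (d : ℝ) < p) (hp2 : p < twoStar d - 1)
    (Q : Ed d → ℝ) (hadm : adm d p Q) (hK : Kfun d μ p Q ≤ 0)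
    (hmin : Ifun d ω p Q = mTilde d ω μ p) :
    Kfun d μ p Q = 0 ∧ Sfun d ω μ p Q = mOmega d ω μ p := by
  have hd2 : 2 < d := by omega
  have hd0 : d ≠ 0 := by omega
  have hp : 4 < d * (p - 1) := four_lt_mul_sub_one (by omega) hp1
  have hp' : (d - 2) * (p - 1) < 4 := sub_two_mul_sub_one_lt_four hd2 hp2
  have hp1' : p ≠ 1 := by
    rintro rfl
    norm_num at hp
  have hK0 := Kfun_eq_zero_of_Ifun_eq_mTilde hd2 hω hμ.le hp hp'.le hadm hK hmin
  refine ⟨hK0, le_antisymm ?_ (mOmega_le_Sfun hd0 hp1' hω.le hp.le hp'.le hadm hK0)⟩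
  rw [Sfun_eq_Ifun_of_Kfun_eq_zero hd0 hp1' hK0, hmin]
  exact mTilde_le_mOmega hd0 hp1' hω.le hp.le hp'.le ⟨Q, hadm, hK0⟩
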